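/- Let u be a smooth complex-valued function on a Riemannian manifold and \u03c9 a smooth real 1-form with \u03c6_\u03c9 = s/\u03c3 where \u2207s = \u03c3\u2207\u03c6_\u03c9 + 2\u03c0i \u03c3 \u03c6_\u03c9 \u03c9 (i.e., \u2207\u03c3 = 2\u03c0i\u03c3\u03c9). If 2\u03c0\u03c6_\u03c9\u03c9 - i(\u03c6\u2080\u2207\u03c6_\u03c9 - \u03c6_\u03c9\u2207\u03c6\u2080)/\u03c6\u2080 = 0 on a domain where \u03c6\u2080 > 0, then \u03c6\u2080\u2207s = s\u2207\u03c6\u2080, and hence s = c\u03c6\u2080 for a constant c on each connected component. -/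

import Mathlib

/-!
Multiplying the eigenfunction relation by `i σ φ₀` and adding `φ₀` times the twisted Leibniz
rule `∇s = σ ∇φ_ω + 2πi σ φ_ω ω` cancels both the `ω`-term and `σ φ₀ ∇φ_ω`, which leaves
`φ₀ ∇s = σ φ_ω ∇φ₀ = s ∇φ₀`. This says exactly that `s / φ₀` has vanishing derivative, so it is
constant on the connected domain.
-/

open scoped Real

theorem smul_eq_smul_of_twisted_leibniz {M : Type*} [AddCommGroup M] [Module ℂ M]
    {σ φ p : ℂ} {Ds Dφ Dp W : M} (hp : p ≠ 0)
    (hDs : Ds = σ • Dφ + (2 * (π : ℂ) * Complex.I * σ * φ) • W)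
    (heig : (2 * (π : ℂ) * φ) • W - (Complex.I / p) • (p • Dφ - φ • Dp) = 0) :
    p • Ds = (σ * φ) • Dp := by
  linear_combination (norm := skip) p • hDs + (Complex.I * σ * p) • heig
  match_scalars <;> grind [Complex.I_sq]

section QuotientRule

variable {E 𝔸 : Type*} [NormedAddCommGroup E] [NormedSpace ℝ E] [NormedField 𝔸]
  [NormedAlgebra ℝ 𝔸]

theorem hasFDerivAt_div_zero_of_smul_eq_smul {s p : E → 𝔸} {s' p' : E →L[ℝ] 𝔸} {x : E}
    (hs : HasFDerivAt s s' x) (hp : HasFDerivAt p p' x) (hpx : p x ≠ 0)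
    (h : p x • s' = s x • p') :
    HasFDerivAt (fun y => s y / p y) (0 : E →L[ℝ] 𝔸) x := by
  have hinv : HasFDerivAt (fun y => (p y)⁻¹) _ x := (hasFDerivAt_inv' (𝕜 := ℝ) hpx).comp x hp
  simp_rw [div_eq_mul_inv]
  convert hs.fun_mul hinv using 1
  ext v
  have hv := congrArg (· v) h
  simp only [smul_apply, smul_eq_mul, zero_apply, ContinuousLinearMap.neg_comp, smul_neg,
    add_apply, neg_apply, ContinuousLinearMap.comp_apply,
    ContinuousLinearMap.mulLeftRight_apply] at hv ⊢
  grind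

theorem IsOpen.exists_eq_mul_of_smul_fderiv_eq_smul_fderiv {Ω : Set E} (hΩ : IsOpen Ω)
    (hΩc : IsPreconnected Ω) {s p : E → 𝔸} (hs : ∀ x ∈ Ω, DifferentiableAt ℝ s x)
    (hp : ∀ x ∈ Ω, DifferentiableAt ℝ p x) (hp0 : ∀ x ∈ Ω, p x ≠ 0)
    (h : ∀ x ∈ Ω, p x • fderiv ℝ s x = s x • fderiv ℝ p x) :
    ∃ c, ∀ x ∈ Ω, s x = c * p x := by
  have hquot : ∀ x ∈ Ω, HasFDerivAt (fun y => s y / p y) (0 : E →L[ℝ] 𝔸) x := fun x hx =>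
    hasFDerivAt_div_zero_of_smul_eq_smul (hs x hx).hasFDerivAt (hp x hx).hasFDerivAt (hp0 x hx)
      (h x hx)
  obtain ⟨c, hc⟩ := hΩ.exists_is_const_of_fderiv_eq_zero hΩc
    (fun x hx => (hquot x hx).differentiableAt.differentiableWithinAt)
    (fun x hx => (hquot x hx).fderiv)
  exact ⟨c, fun x hx => by rw [← hc x hx, div_mul_cancel₀ _ (hp0 x hx)]⟩

end QuotientRule

theorem stmt_6_general {E : Type*} [NormedAddCommGroup E] [NormedSpace ℝ E]
    (Ω : Set E) (hΩo : IsOpen Ω) (hΩc : IsConnected Ω)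
    (φ₀ : E → ℝ) (s σ φω : E → ℂ) (ω : E → (E →L[ℝ] ℝ))
    (hφ₀pos : ∀ x ∈ Ω, 0 < φ₀ x)
    (hφ₀d : ∀ x ∈ Ω, DifferentiableAt ℝ (fun y => (φ₀ y : ℂ)) x)
    (hsd : ∀ x ∈ Ω, DifferentiableAt ℝ s x)
    (hσ0 : ∀ x ∈ Ω, σ x ≠ 0)
    (hφω : ∀ x ∈ Ω, φω x = s x / σ x)
    (hds : ∀ x ∈ Ω, fderiv ℝ s x =
      σ x • fderiv ℝ φω x +
        (2 * (π : ℂ) * Complex.I * σ x * φω x) • (Complex.ofRealCLM.comp (ω x)))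
    (heig : ∀ x ∈ Ω,
      (2 * (π : ℂ) * φω x) • (Complex.ofRealCLM.comp (ω x)) -
        (Complex.I / (φ₀ x : ℂ)) •
          ((φ₀ x : ℂ) • fderiv ℝ φω x - φω x • fderiv ℝ (fun y => (φ₀ y : ℂ)) x) = 0) :
    (∀ x ∈ Ω, (φ₀ x : ℂ) • fderiv ℝ s x = s x • fderiv ℝ (fun y => (φ₀ y : ℂ)) x) ∧
    ∃ c : ℂ, ∀ x ∈ Ω, s x = c * (φ₀ x : ℂ) := by
  have hφ₀ne : ∀ x ∈ Ω, (φ₀ x : ℂ) ≠ 0 := fun x hx => by exact_mod_cast (hφ₀pos x hx).ne'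
  have hleibniz : ∀ x ∈ Ω,
      (φ₀ x : ℂ) • fderiv ℝ s x = s x • fderiv ℝ (fun y => (φ₀ y : ℂ)) x := by
    intro x hx
    have hs : s x = σ x * φω x := by rw [hφω x hx, mul_div_cancel₀ _ (hσ0 x hx)]
    rw [hs]
    exact smul_eq_smul_of_twisted_leibniz (hφ₀ne x hx) (hds x hx) (heig x hx)
  exact ⟨hleibniz, hΩo.exists_eq_mul_of_smul_fderiv_eq_smul_fderiv hΩc.isPreconnected hsd hφ₀d
    hφ₀ne hleibniz⟩

/-- rigidity step in the uniqueness of the minimizer of the principal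
eigenvalue. With φ_ω = s/σ, ∇σ = 2πiσω (so ∇s = σ∇φ_ω + 2πiσφ_ω ω), if
2πφ_ω ω − i(φ₀∇φ_ω − φ_ω∇φ₀)/φ₀ = 0 on a connected open set where φ₀ > 0, then
φ₀∇s = s∇φ₀, and hence s = c·φ₀ for some constant c. -/
theorem stmt_6 {E : Type*} [NormedAddCommGroup E] [NormedSpace ℝ E]
    (Ω : Set E) (hΩo : IsOpen Ω) (hΩc : IsConnected Ω)
    (φ₀ : E → ℝ) (s σ φω : E → ℂ) (ω : E → (E →L[ℝ] ℝ))
    (hφ₀pos : ∀ x ∈ Ω, 0 < φ₀ x)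
    (hφ₀d : ∀ x ∈ Ω, DifferentiableAt ℝ (fun y => (φ₀ y : ℂ)) x)
    (hsd : ∀ x ∈ Ω, DifferentiableAt ℝ s x)
    (hφωd : ∀ x ∈ Ω, DifferentiableAt ℝ φω x)
    (hσ0 : ∀ x ∈ Ω, σ x ≠ 0)
    (hφω : ∀ x ∈ Ω, φω x = s x / σ x)
    (hds : ∀ x ∈ Ω, fderiv ℝ s x =
      σ x • fderiv ℝ φω x +
        (2 * (π : ℂ) * Complex.I * σ x * φω x) • (Complex.ofRealCLM.comp (ω x)))
    (heig : ∀ x ∈ Ω,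
      (2 * (π : ℂ) * φω x) • (Complex.ofRealCLM.comp (ω x)) -
        (Complex.I / (φ₀ x : ℂ)) •
          ((φ₀ x : ℂ) • fderiv ℝ φω x - φω x • fderiv ℝ (fun y => (φ₀ y : ℂ)) x) = 0) :
    (∀ x ∈ Ω, (φ₀ x : ℂ) • fderiv ℝ s x = s x • fderiv ℝ (fun y => (φ₀ y : ℂ)) x) ∧
    ∃ c : ℂ, ∀ x ∈ Ω, s x = c * (φ₀ x : ℂ) :=
  stmt_6_general Ω hΩo hΩc φ₀ s σ φω ω hφ₀pos hφ₀d hsd hσ0 hφω hds heig
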